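/- In a Q-metric space with Q continuous, for every A ⊆ X the closure of A in the dual open ball topology τ_d^o equals ∩_{δ≪1} B_R(A,δ). -/

import Mathlib

/-!
A set `U` is open for the dual ball topology iff around each of its points `y` it contains a
ball `ballo d y γ` centred at `y` with `γ ≪ 1`: a generating ball `ballo d x δ` containing `y`
satisfies `δ ≪ d y x`, and continuity of `Q` gives `γ ≪ 1` with `δ ≪ γ * d y x`, so the
triangle inequality puts `ballo d y γ` inside `ballo d x δ`. Hence these centred balls form a
neighbourhood basis at `y`, and `y ∈ closure A` says exactly that each of them meets `A`, i.e.
`y ∈ BR d A γ` for all `γ ≪ 1`.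
-/

/-- `a` is way-below `b`: for every nonempty directed `D` with `b ≤ sSup D`,
some element of `D` dominates `a`. -/
def WayBelow {Q : Type*} [CompleteLattice Q] (a b : Q) : Prop :=
  ∀ D : Set Q, D.Nonempty → DirectedOn (· ≤ ·) D → b ≤ sSup D → ∃ d ∈ D, a ≤ d

/-- A complete lattice is continuous if every element is the join of the
elements way-below it. -/
def ContinuousLattice (Q : Type*) [CompleteLattice Q] : Prop :=
  ∀ x : Q, x = sSup {y | WayBelow y x}

/-- `B_R(A,δ)`: points belonging to `A` with precision greater than `δ`. -/
def BR {Q X : Type*} [CompleteLattice Q] (d : X → X → Q) (A : Set X) (δ : Q) : Set X :=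
  {y | ∃ x ∈ A, WayBelow δ (d x y)}

/-- Dual open ball. -/
def ballo {Q X : Type*} [CompleteLattice Q] (d : X → X → Q) (x : X) (δ : Q) : Set X :=
  {y | WayBelow δ (d y x)}

open Topology

section WayBelow

variable {Q : Type*} [CompleteLattice Q] {a b c : Q}

theorem bot_wayBelow (b : Q) : WayBelow ⊥ b := fun _ ⟨c, hc⟩ _ _ => ⟨c, hc, bot_le⟩

theorem wayBelow_of_le_of_wayBelow (hab : a ≤ b) (hbc : WayBelow b c) : WayBelow a c :=
  fun D hne hdir hle => (hbc D hne hdir hle).imp fun _ ⟨he, hbe⟩ => ⟨he, hab.trans hbe⟩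

theorem WayBelow.trans_le (hab : WayBelow a b) (hbc : b ≤ c) : WayBelow a c :=
  fun D hne hdir hle => hab D hne hdir (hbc.trans hle)

theorem WayBelow.le (h : WayBelow a b) : a ≤ b := by
  obtain ⟨e, rfl, hae⟩ :=
    h {b} (Set.singleton_nonempty b) (directedOn_singleton b) sSup_singleton.ge
  exact hae

theorem WayBelow.sup (ha : WayBelow a c) (hb : WayBelow b c) : WayBelow (a ⊔ b) c := by
  intro D hne hdir hle
  obtain ⟨e₁, he₁, hae₁⟩ := ha D hne hdir hle
  obtain ⟨e₂, he₂, hbe₂⟩ := hb D hne hdir hle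
  obtain ⟨e, he, he₁e, he₂e⟩ := hdir e₁ he₁ e₂ he₂
  exact ⟨e, he, sup_le (hae₁.trans he₁e) (hbe₂.trans he₂e)⟩

theorem directedOn_wayBelow (b : Q) : DirectedOn (· ≤ ·) {a | WayBelow a b} :=
  fun a ha a' ha' => ⟨a ⊔ a', ha.sup ha', le_sup_left, le_sup_right⟩

theorem ContinuousLattice.exists_wayBelow_wayBelow (hcont : ContinuousLattice Q)
    (h : WayBelow a b) : ∃ c, WayBelow a c ∧ WayBelow c b := by
  let D : Set Q := {u | ∃ v, WayBelow u v ∧ WayBelow v b}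
  have hdir : DirectedOn (· ≤ ·) D := by
    rintro u₁ ⟨v₁, hu₁, hv₁⟩ u₂ ⟨v₂, hu₂, hv₂⟩
    obtain ⟨v, hv, hv₁v, hv₂v⟩ := directedOn_wayBelow b v₁ hv₁ v₂ hv₂
    exact ⟨u₁ ⊔ u₂, ⟨v, (hu₁.trans_le hv₁v).sup (hu₂.trans_le hv₂v), hv⟩,
      le_sup_left, le_sup_right⟩
  have hb : b ≤ sSup D := by
    rw [hcont b]
    refine sSup_le fun v hv => ?_
    rw [hcont v]
    exact sSup_le fun u hu => le_sSup ⟨v, hu, hv⟩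
  obtain ⟨u, ⟨v, huv, hvb⟩, hau⟩ :=
    h D ⟨⊥, ⊥, bot_wayBelow ⊥, bot_wayBelow b⟩ hdir hb
  exact ⟨v, wayBelow_of_le_of_wayBelow hau huv, hvb⟩

end WayBelow

theorem ContinuousLattice.exists_wayBelow_one_wayBelow_mul {Q : Type*} [CompleteLattice Q]
    [Monoid Q] [IsQuantale Q] (hcont : ContinuousLattice Q) {δ b : Q} (h : WayBelow δ b) :
    ∃ γ, WayBelow γ 1 ∧ WayBelow δ (γ * b) := by
  obtain ⟨ε, hδε, hεb⟩ := hcont.exists_wayBelow_wayBelow h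
  let D : Set Q := (· * b) '' {γ | WayBelow γ 1}
  have hdir : DirectedOn (· ≤ ·) D :=
    (directedOn_wayBelow 1).mono_comp fun _ _ h => mul_le_mul_left h b
  have hb : b = sSup D := by
    rw [sSup_image, ← sSup_mul_distrib, ← hcont 1, one_mul]
  obtain ⟨_, ⟨γ, hγ, rfl⟩, hεγ⟩ := hεb D ⟨_, ⊥, bot_wayBelow 1, rfl⟩ hdir hb.le
  exact ⟨γ, hγ, hδε.trans_le hεγ⟩

section DualBallTopology

variable {Q X : Type*} [CompleteLattice Q] [Monoid Q] {d : X → X → Q}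

variable (d) in
/-- The topology `τ_d^o`. -/
abbrev dualBallTopology : TopologicalSpace X :=
  TopologicalSpace.generateFrom {s | ∃ (x : X) (δ : Q), WayBelow δ 1 ∧ s = ballo d x δ}

theorem isOpen_ballo {x : X} {δ : Q} (hδ : WayBelow δ 1) :
    IsOpen[dualBallTopology d] (ballo d x δ) :=
  TopologicalSpace.isOpen_generateFrom_of_mem ⟨x, δ, hδ, rfl⟩

theorem mem_ballo_self (hrefl : ∀ x : X, 1 ≤ d x x) {y : X} {δ : Q} (hδ : WayBelow δ 1) :
    y ∈ ballo d y δ :=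
  hδ.trans_le (hrefl y)

theorem ballo_subset_ballo [IsQuantale Q] (htri : ∀ x y z : X, d x y * d y z ≤ d x z)
    {x y : X} {γ δ : Q} (h : WayBelow δ (γ * d y x)) : ballo d y γ ⊆ ballo d x δ :=
  fun w hw => h.trans_le ((mul_le_mul_left hw.le _).trans (htri w y x))

theorem exists_ballo_subset_of_isOpen [IsQuantale Q] (hcont : ContinuousLattice Q)
    (htri : ∀ x y z : X, d x y * d y z ≤ d x z) {U : Set X}
    (hU : IsOpen[dualBallTopology d] U) {y : X} (hy : y ∈ U) :
    ∃ γ, WayBelow γ 1 ∧ ballo d y γ ⊆ U := by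
  induction hU generalizing y with
  | basic s hs =>
    obtain ⟨x, δ, -, rfl⟩ := hs
    obtain ⟨γ, hγ, hδγ⟩ := hcont.exists_wayBelow_one_wayBelow_mul hy
    exact ⟨γ, hγ, ballo_subset_ballo htri hδγ⟩
  | univ => exact ⟨⊥, bot_wayBelow 1, Set.subset_univ _⟩
  | inter U V _ _ ihU ihV =>
    obtain ⟨γ₁, hγ₁, hsubU⟩ := ihU hy.1
    obtain ⟨γ₂, hγ₂, hsubV⟩ := ihV hy.2
    exact ⟨γ₁ ⊔ γ₂, hγ₁.sup hγ₂, fun w hw =>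
      ⟨hsubU (wayBelow_of_le_of_wayBelow le_sup_left hw),
        hsubV (wayBelow_of_le_of_wayBelow le_sup_right hw)⟩⟩
  | sUnion S _ ih =>
    obtain ⟨s, hs, hys⟩ := hy
    obtain ⟨γ, hγ, hsub⟩ := ih s hs hys
    exact ⟨γ, hγ, hsub.trans (Set.subset_sUnion_of_mem hs)⟩

theorem hasBasis_nhds_dualBallTopology [IsQuantale Q] (hcont : ContinuousLattice Q)
    (hrefl : ∀ x : X, 1 ≤ d x x) (htri : ∀ x y z : X, d x y * d y z ≤ d x z) (y : X) :
    (@nhds X (dualBallTopology d) y).HasBasis (fun γ => WayBelow γ 1) (ballo d y) := by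
  let := dualBallTopology d
  refine ⟨fun t => ⟨fun ht => ?_, fun ⟨γ, hγ, hsub⟩ => ?_⟩⟩
  · obtain ⟨U, hUt, hU, hyU⟩ := mem_nhds_iff.1 ht
    obtain ⟨γ, hγ, hsub⟩ := exists_ballo_subset_of_isOpen hcont htri hU hyU
    exact ⟨γ, hγ, hsub.trans hUt⟩
  · exact Filter.mem_of_superset ((isOpen_ballo hγ).mem_nhds (mem_ballo_self hrefl hγ)) hsub

end DualBallTopology

theorem dual_closure_eq_iInter_BR {Q X : Type*} [CompleteLattice Q] [Monoid Q] [IsQuantale Q]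
    (hcont : ContinuousLattice Q) (d : X → X → Q)
    (hrefl : ∀ x : X, 1 ≤ d x x) (htri : ∀ x y z : X, d x y * d y z ≤ d x z)
    (A : Set X) :
    @closure X (TopologicalSpace.generateFrom
        {s | ∃ (x : X) (δ : Q), WayBelow δ 1 ∧ s = ballo d x δ}) A =
      ⋂ δ ∈ {δ : Q | WayBelow δ 1}, BR d A δ := by
  ext y
  rw [@mem_closure_iff_nhds_basis X (dualBallTopology d) _ y A _ _
    (hasBasis_nhds_dualBallTopology hcont hrefl htri y)]
  simp only [Set.mem_iInter, Set.mem_ofPred_eq, BR, ballo]
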